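/- Let S be a reduced string with a simple partial order ≤ on its alphabet, let a be the unlonely letter whose second occurrence is earliest, and suppose the earliest minimal lonely letter b exists and occurs strictly between the first two occurrences of a. If both a and b are minimal with respect to ≤ and b occurs immediately after the first occurrence of a in S, then (S, ≤) is b-decided. -/

import Mathlib

open List

universe u

variable {Γ : Type u}

/-- No three letters `a <ℓ b <ℓ c` occur in `S` as a subsequence in the order `b, c, a`. -/
def NoBCA (S : List Γ) (le : Γ → Γ → Prop) : Prop :=
  ∀ a b c : Γ, le a b → a ≠ b → le b c → b ≠ c → ¬ ([b, c, a] <+ S)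

/-- The pair `(S, le)` is foot-sortable: some linear order extending `le` avoids the
`b, c, a` configuration. -/
def PairFootSortable (S : List Γ) (le : Γ → Γ → Prop) : Prop :=
  ∃ le' : Γ → Γ → Prop, IsLinearOrder Γ le' ∧ (∀ x y, le x y → le' x y) ∧ NoBCA S le'

/-- The sock ordering `S` is foot-sortable. -/
def FootSortable (S : List Γ) : Prop :=
  ∃ le : Γ → Γ → Prop, IsLinearOrder Γ le ∧ NoBCA S le

/-- `(S, le)` is `Γ'`-decided. -/
def DecidedBy (S : List Γ) (le : Γ → Γ → Prop) (Γ' : Set Γ) : Prop :=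
  ¬ PairFootSortable S le ∨
    ∃ le' : Γ → Γ → Prop, IsLinearOrder Γ le' ∧ (∀ x y, le x y → le' x y) ∧
      (∃ m ∈ Γ', ∀ x, le' m x) ∧ NoBCA S le'

/-- `le` is a simple partial order with respect to `S`: there is a prefix of `S`
such that `x ≥ y` iff `x = y` or `x y` occurs as a subsequence of the prefix. -/
def SimpleOrder (S : List Γ) (le : Γ → Γ → Prop) : Prop :=
  ∃ k ≤ S.length, ∀ x y : Γ, le y x ↔ (x = y ∨ [x, y] <+ S.take k)

/-- Index of the second occurrence of `a` in `S` (meaningful when `a` occurs twice). -/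
def secondIdx [DecidableEq Γ] (S : List Γ) (a : Γ) : ℕ :=
  S.idxOf a + 1 + (S.drop (S.idxOf a + 1)).idxOf a

/-- The letters of `S` strictly between the first two occurrences of `a`. -/
def betweenFirstTwo [DecidableEq Γ] (S : List Γ) (a : Γ) : List Γ :=
  (S.drop (S.idxOf a + 1)).takeWhile (fun c => c != a)

/-- Every color occurs at most twice. -/
def TwoBounded [DecidableEq Γ] (S : List Γ) : Prop := ∀ x : Γ, S.count x ≤ 2

/-- A minimal non-foot-sortable 2-bounded sock ordering. -/
def Critical [DecidableEq Γ] (S : List Γ) : Prop :=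
  TwoBounded S ∧ ¬ FootSortable S ∧ ∀ i < S.length, FootSortable (S.eraseIdx i)

/-- The tail `a_{n-2} a_{n-1} a_{n-3} a_{n-2} ⋯ a₀ a₁`. -/
def tailPairs (a : ℕ → Γ) (n : ℕ) : List Γ :=
  ((List.range (n - 1)).reverse).flatMap fun i => [a i, a (i + 1)]

/-- Type A: `x a₀ y a_{n-1} x a_{n-2} a_{n-1} ⋯ a₀ a₁`. -/
def typeA (a : ℕ → Γ) (x y : Γ) (n : ℕ) : List Γ :=
  x :: a 0 :: y :: a (n - 1) :: x :: tailPairs a n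

/-- Type B: `a₀ x y a_{n-1} x y a_{n-2} a_{n-1} ⋯ a₀ a₁`. -/
def typeB (a : ℕ → Γ) (x y : Γ) (n : ℕ) : List Γ :=
  a 0 :: x :: y :: a (n - 1) :: x :: y :: tailPairs a n

/-- Type B': `a₀ y x a_{n-1} x y a_{n-2} a_{n-1} ⋯ a₀ a₁`. -/
def typeB' (a : ℕ → Γ) (x y : Γ) (n : ℕ) : List Γ :=
  a 0 :: y :: x :: a (n - 1) :: x :: y :: tailPairs a n

/-- Type C: `a₀ x a_{n-1} y z y x a_{n-2} a_{n-1} ⋯ a₀ a₁`. -/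
def typeC (a : ℕ → Γ) (x y z : Γ) (n : ℕ) : List Γ :=
  a 0 :: x :: a (n - 1) :: y :: z :: y :: x :: tailPairs a n

/-- `S` contains `P` as a pattern. -/
def ContainsPattern {Δ : Type*} (S : List Γ) (P : List Δ) : Prop :=
  ∃ f : Δ → Γ, (∀ i ∈ P, ∀ j ∈ P, f i = f j → i = j) ∧ P.map f <+ S

/-- The 14 sporadic critical sock orderings, with `a,b,c,d,e,f` encoded as `0,…,5`. -/
def sporadicPatterns : List (List ℕ) :=
  [[0,1,2,3,1,0,2,3], [0,1,2,3,4,3,0,1,2],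
   [0,1,2,0,3,1,3,2], [0,1,2,1,3,0,3,2], [0,1,2,3,1,0,3,2], [0,1,2,3,2,0,3,1],
   [0,1,2,3,2,4,0,4,1], [0,1,2,3,4,3,0,2,1],
   [0,1,2,3,1,2,0,3], [0,1,2,3,2,1,0,3], [0,1,2,3,4,3,1,0,2],
   [0,1,2,0,1,3,4,3,2], [0,1,2,3,0,3,4,3,2], [0,1,2,3,2,0,4,5,4,1]]

/-- The forbidden patterns: the 14 sporadic orderings and the four infinite families,
realized over `ℕ` with `aᵢ = i`, `x = n`, `y = n + 1`, `z = n + 2`. -/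
def Forbidden (P : List ℕ) : Prop :=
  P ∈ sporadicPatterns ∨
    (∃ n, 2 ≤ n ∧ P = typeA (fun i => i) n (n + 1) n) ∨
    (∃ n, 3 ≤ n ∧ P = typeB (fun i => i) n (n + 1) n) ∨
    (∃ n, 3 ≤ n ∧ P = typeB' (fun i => i) n (n + 1) n) ∨
    (∃ n, 3 ≤ n ∧ P = typeC (fun i => i) n (n + 1) (n + 2) n)


section Helpers

variable {Γ : Type u}

lemma take_sublist_take {S : List Γ} {m n : ℕ} (h : m ≤ n) : S.take m <+ S.take n := by
  have heq : S.take m = (S.take n).take m := by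
    rw [List.take_take, Nat.min_eq_left h]
  rw [heq]
  exact List.take_sublist _ _

lemma take_succ_getElem {S : List Γ} {n : ℕ} (h : n < S.length) :
    S.take (n + 1) = S.take n ++ [S[n]] := by
  rw [List.take_succ, List.getElem?_eq_getElem h]
  rfl

lemma sublist_take_step {S L : List Γ} {n p : ℕ} (h : L <+ S.take n)
    (hnp : n ≤ p) (hp : p < S.length) : L ++ [S[p]] <+ S.take (p + 1) := by
  have h1 : L <+ S.take p := h.trans (take_sublist_take hnp)
  rw [take_succ_getElem hp]
  exact h1.append_right _

lemma getElem_congr_idx' {S : List Γ} {i j : ℕ} (h : i = j) (hi : i < S.length) :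
    S[i]'hi = S[j]'(h ▸ hi) := by subst h; rfl

lemma not_mem_take_indexOf [DecidableEq Γ] (S : List Γ) (x : Γ) :
    x ∉ S.take (S.idxOf x) := by
  induction S with
  | nil => simp
  | cons c T ih =>
    by_cases hc : c = x
    · subst hc
      simp [List.idxOf_cons_self]
    · rw [List.idxOf_cons_ne _ hc]
      intro hmem
      rw [Nat.succ_eq_add_one, List.take_succ_cons] at hmem
      rcases List.mem_cons.1 hmem with h | h
      · exact hc h.symm
      · exact ih h

lemma indexOf_lt_of_mem_take [DecidableEq Γ] {S : List Γ} {x : Γ} {n : ℕ}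
    (h : x ∈ S.take n) : S.idxOf x < n := by
  by_contra hn
  push_neg at hn
  exact not_mem_take_indexOf S x ((take_sublist_take hn).subset h)

lemma sublist_middle {L T U : List Γ} {w : Γ} (h : L ++ [w] <+ T ++ w :: U)
    (hT : w ∉ T) (hU : w ∉ U) : L <+ T := by
  rw [List.sublist_append_iff] at h
  obtain ⟨r₁, r₂, heq, h1, h2⟩ := h
  have hwr₁ : w ∉ r₁ := fun hw => hT (h1.subset hw)
  cases h2 with
  | cons _ h2' =>
    exfalso
    have hwr₂ : w ∉ r₂ := fun hw => hU (h2'.subset hw)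
    have hw : w ∈ r₁ ++ r₂ := by rw [← heq]; simp
    rcases List.mem_append.1 hw with h' | h'
    · exact hwr₁ h'
    · exact hwr₂ h'
  | @cons_cons t _ _ h2' =>
    have hwt : w ∉ t := fun hw => hU (h2'.subset hw)
    have ht : t = [] := by
      rcases List.eq_nil_or_concat t with h | ⟨t', x, rfl⟩
      · exact h
      · exfalso
        have heq2 : L ++ [w] = (r₁ ++ w :: t') ++ [x] := by
          rw [heq]; simp
        have hx : w = x := by
          have e1 : (L ++ [w]).getLast? = some w := List.getLast?_concat
          have e2 : ((r₁ ++ w :: t') ++ [x]).getLast? = some x := List.getLast?_concat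
          rw [heq2] at e1
          rw [e1] at e2
          injection e2
        exact hwt (by rw [← hx]; simp)
    subst ht
    have hL : L = r₁ := by
      have := congrArg List.dropLast heq
      simpa [List.dropLast_concat] using this
    rw [hL]
    exact h1

lemma mem_drop_of_two_le_count [DecidableEq Γ] {S : List Γ} {x : Γ}
    (h : 2 ≤ S.count x) : x ∈ S.drop (S.idxOf x + 1) := by
  have hx : x ∈ S := List.count_pos_iff.1 (by omega)
  have hlt : S.idxOf x < S.length := List.idxOf_lt_length_iff.2 hx
  have htake : S.take (S.idxOf x + 1) = S.take (S.idxOf x) ++ [x] := by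
    rw [take_succ_getElem hlt, List.getElem_idxOf hlt]
  have hcount : S.count x
      = (S.take (S.idxOf x + 1)).count x + (S.drop (S.idxOf x + 1)).count x := by
    rw [← List.count_append, List.take_append_drop]
  have h1 : (S.take (S.idxOf x + 1)).count x = 1 := by
    rw [htake, List.count_append]
    rw [List.count_eq_zero.2 (not_mem_take_indexOf S x)]
    simp
  rw [h1] at hcount
  exact List.count_pos_iff.1 (by omega)

lemma secondIdx_lt [DecidableEq Γ] {S : List Γ} {x : Γ} (h : 2 ≤ S.count x) :
    secondIdx S x < S.length := by
  have hm := mem_drop_of_two_le_count h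
  have h1 := List.idxOf_lt_length_iff.2 hm
  rw [List.length_drop] at h1
  have hx : x ∈ S := List.count_pos_iff.1 (by omega)
  have h2 : S.idxOf x < S.length := List.idxOf_lt_length_iff.2 hx
  unfold secondIdx
  omega

lemma getElem_secondIdx [DecidableEq Γ] {S : List Γ} {x : Γ} (h : 2 ≤ S.count x)
    (hl : secondIdx S x < S.length) : S[secondIdx S x] = x := by
  have hm := mem_drop_of_two_le_count h
  have h1 := List.idxOf_lt_length_iff.2 hm
  have := List.getElem_idxOf h1
  rw [List.getElem_drop] at this
  exact this

lemma exists_le_min (le : Γ → Γ → Prop) (hpo : IsPartialOrder Γ le) (M : List Γ)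
    (hM : ∀ u v : Γ, le u v → u ≠ v → u ∈ M) {y x0 : Γ} (h0 : le x0 y) (hne : x0 ≠ y) :
    ∃ x, le x y ∧ x ≠ y ∧ ∀ w, le w x → w = x := by
  classical
  letI : Preorder Γ :=
    { le := le
      le_refl := hpo.toIsPreorder.toRefl.refl
      le_trans := hpo.toIsPreorder.toIsTrans.trans }
  have hanti : ∀ u v : Γ, le u v → le v u → u = v := hpo.toAntisymm.antisymm
  have htrans : ∀ u v w : Γ, le u v → le v w → le u w := hpo.toIsPreorder.toIsTrans.trans
  have hD : (M.toFinset.filter (fun x => le x y ∧ x ≠ y)).Nonempty := by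
    refine ⟨x0, ?_⟩
    rw [Finset.mem_filter]
    exact ⟨List.mem_toFinset.2 (hM _ _ h0 hne), h0, hne⟩
  obtain ⟨m, hmD, hmin⟩ := Finset.exists_minimal hD
  rw [Finset.mem_filter] at hmD
  refine ⟨m, hmD.2.1, hmD.2.2, fun w hw => ?_⟩
  by_contra hwm
  have hwy : le w y := htrans _ _ _ hw hmD.2.1
  have hwyne : w ≠ y := by
    rintro rfl
    exact hmD.2.2 (hanti _ _ hmD.2.1 hw)
  have hwD : w ∈ M.toFinset.filter (fun x => le x y ∧ x ≠ y) := by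
    rw [Finset.mem_filter]
    exact ⟨List.mem_toFinset.2 (hM _ _ hwy hwyne), hwy, hwyne⟩
  exact hwm (hanti _ _ hw (hmin hwD hw))

end Helpers

/-- In the setting of Case 3, if both `a, b` are minimal and `b` occurs immediately
after the first occurrence of `a`, then `(S, le)` is `b`-decided. -/
theorem statement10 {Γ : Type u} [DecidableEq Γ] (S : List Γ) (le : Γ → Γ → Prop)
    (hpo : IsPartialOrder Γ le) (hred : List.Chain' (· ≠ ·) S)
    (hsimp : SimpleOrder S le)
    (a : Γ) (ha : 2 ≤ S.count a)
    (haE : ∀ c : Γ, 2 ≤ S.count c → secondIdx S a ≤ secondIdx S c)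
    (b : Γ) (hb : S.count b = 1) (hbmin : ∀ x, le x b → x = b)
    (hbE : ∀ c : Γ, S.count c = 1 → (∀ x, le x c → x = c) → S.idxOf b ≤ S.idxOf c)
    (hb1 : S.idxOf a < S.idxOf b) (hb2 : S.idxOf b < secondIdx S a)
    (hamin : ∀ w, le w a → w = a)
    (hadj : S.idxOf b = S.idxOf a + 1) :
    DecidedBy S le {b} := by
  classical
  by_cases hfs : PairFootSortable S le
  case neg => exact Or.inl hfs
  obtain ⟨le', hlin, hext, hnb⟩ := hfs
  haveI := hlin
  right
  obtain ⟨k, hkS, hiff⟩ := hsimp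
  have hbS : b ∈ S := List.count_pos_iff.1 (by omega)
  have haS : a ∈ S := List.count_pos_iff.1 (by omega)
  have hiblen : S.idxOf b < S.length := List.idxOf_lt_length_iff.2 hbS
  have hialen : S.idxOf a < S.length := List.idxOf_lt_length_iff.2 haS
  have hSb : S[S.idxOf b] = b := List.getElem_idxOf hiblen
  have hSa : S[S.idxOf a] = a := List.getElem_idxOf hialen
  have hab : a ≠ b := by rintro rfl; omega
  have hs2lt : secondIdx S a < S.length := secondIdx_lt ha
  have hs2a : S[secondIdx S a] = a := getElem_secondIdx ha hs2lt
  have hs2ge1 : S.idxOf a + 1 ≤ secondIdx S a := by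
    unfold secondIdx; omega
  have hs2ne : secondIdx S a ≠ S.idxOf a + 1 := by
    intro hEq
    apply hab
    rw [← hs2a, getElem_congr_idx' (hEq.trans hadj.symm) hs2lt, hSb]
  have hs2ge : S.idxOf a + 2 ≤ secondIdx S a := by omega
  -- the prefix length k is at most indexOf a + 1
  have hk1 : k ≤ S.idxOf a + 1 := by
    by_contra hk2
    push_neg at hk2
    have hSb' : S[S.idxOf a + 1]'(hadj ▸ hiblen) = b := by
      rw [getElem_congr_idx' hadj.symm (hadj ▸ hiblen), hSb]
    have h0 : [a] <+ S.take (S.idxOf a + 1) := by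
      have := sublist_take_step (List.nil_sublist (S.take (S.idxOf a))) (le_refl _) hialen
      rw [hSa] at this
      simpa using this
    have h1 : [a, b] <+ S.take (S.idxOf a + 2) := by
      have := sublist_take_step h0 (le_refl _) (hadj ▸ hiblen)
      rw [hSb'] at this
      simpa using this
    have h2 : [a, b] <+ S.take k := h1.trans (take_sublist_take (by omega))
    have : le b a := (hiff a b).2 (Or.inr h2)
    exact hab (hamin b this).symm
  -- the modified order
  set R : Γ → Γ → Prop := fun u v => u = b ∨ (v ≠ b ∧ le' u v) with hR
  have hlinR : IsLinearOrder Γ R := by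
    refine { refl := ?_, trans := ?_, antisymm := ?_, total := ?_ }
    · intro x
      by_cases hx : x = b
      · exact Or.inl hx
      · exact Or.inr ⟨hx, Std.Refl.refl x⟩
    · intro x y z hxy hyz
      rcases hxy with rfl | ⟨hyb, h1⟩
      · exact Or.inl rfl
      · rcases hyz with rfl | ⟨hzb, h2⟩
        · exact absurd rfl hyb
        · exact Or.inr ⟨hzb, IsTrans.trans x y z h1 h2⟩
    · intro x y hxy hyx
      rcases hxy with rfl | ⟨hyb, h1⟩
      · rcases hyx with rfl | ⟨hxb, h2⟩
        · rfl
        · exact absurd rfl hxb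
      · rcases hyx with rfl | ⟨hxb, h2⟩
        · exact absurd rfl hyb
        · exact Std.Antisymm.antisymm x y h1 h2
    · intro x y
      by_cases hx : x = b
      · exact Or.inl (Or.inl hx)
      by_cases hy : y = b
      · exact Or.inr (Or.inl hy)
      rcases Std.Total.total (r := le') x y with h | h
      · exact Or.inl (Or.inr ⟨hy, h⟩)
      · exact Or.inr (Or.inr ⟨hx, h⟩)
  refine ⟨R, hlinR, ?_, ⟨b, Set.mem_singleton b, fun x => Or.inl rfl⟩, ?_⟩
  · intro x y hxy
    by_cases hx : x = b
    · exact Or.inl hx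
    · refine Or.inr ⟨?_, hext x y hxy⟩
      rintro rfl
      exact hx (hbmin x hxy)
  -- NoBCA for R
  intro p q r hpq hpq' hqr hqr' hsub
  have hqb : q ≠ b := by
    rintro rfl
    rcases hpq with h | h
    · exact hpq' h
    · exact h.1 rfl
  rcases hqr with h | h
  · exact hqb h
  obtain ⟨hrb, hqr''⟩ := h
  rcases hpq with hpb | hpq''
  rotate_left
  · exact hnb p q r hpq''.2 hpq' hqr'' hqr' hsub
  rw [hpb] at hsub
  -- main case: pattern [q, r, b] <+ S with le' q r
  -- Step 1: [q, r] <+ S.take (indexOf a + 1)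
  have hbsplit : S = S.take (S.idxOf b) ++ b :: S.drop (S.idxOf b + 1) := by
    conv_lhs => rw [← List.take_append_drop (S.idxOf b) S]
    rw [List.drop_eq_getElem_cons hiblen, hSb]
  have hbU : b ∉ S.drop (S.idxOf b + 1) := by
    intro hmem
    have h1 : 1 ≤ (S.drop (S.idxOf b + 1)).count b := List.count_pos_iff.2 hmem
    have h2 : S.count b = (S.take (S.idxOf b)).count b
        + (b :: S.drop (S.idxOf b + 1)).count b := by
      rw [← List.count_append, ← hbsplit]
    rw [List.count_cons_self] at h2
    omega
  have hqr_take : [q, r] <+ S.take (S.idxOf b) := by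
    apply sublist_middle (U := S.drop (S.idxOf b + 1)) (w := b)
    · rw [← hbsplit]; simpa using hsub
    · exact not_mem_take_indexOf S b
    · exact hbU
  rw [hadj] at hqr_take
  -- Step 2: q occurs strictly before indexOf a
  have htaia : S.take (S.idxOf a + 1) = S.take (S.idxOf a) ++ [a] := by
    rw [take_succ_getElem hialen, hSa]
  have hq1 : [q] <+ S.take (S.idxOf a) := by
    have h := hqr_take
    rw [htaia, List.sublist_append_iff] at h
    obtain ⟨r₁, r₂, heq, h1, h2⟩ := h
    cases h2 with
    | cons _ h2' =>
      have : r₂ = [] := List.sublist_nil.1 h2'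
      subst this
      rw [List.append_nil] at heq
      subst heq
      have : [q] <+ [q, r] := by
        apply List.Sublist.cons₂
        simp
      exact this.trans h1
    | @cons_cons t _ _ h2' =>
      have ht : t = [] := List.sublist_nil.1 h2'
      subst ht
      have hr₁ : [q] = r₁ := by
        simpa [List.dropLast_concat] using congrArg List.dropLast heq
      rw [← hr₁] at h1
      exact h1
  have hq_mem_take : q ∈ S.take (S.idxOf a) := hq1.subset (by simp)
  have hq_ia : S.idxOf q < S.idxOf a := indexOf_lt_of_mem_take hq_mem_take
  have hq_ne_a : q ≠ a := by
    rintro rfl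
    exact not_mem_take_indexOf S q hq_mem_take
  have hq_mem_S : q ∈ S := List.take_subset _ _ hq_mem_take
  -- Step 3: le' q a and le' q b
  have hqra : [q, r, a] <+ S := by
    have h := sublist_take_step hqr_take hs2ge1 hs2lt
    rw [hs2a] at h
    exact (by simpa using h : [q, r, a] <+ S.take (secondIdx S a + 1)).trans
      (List.take_sublist _ _)
  have hlqa : le' q a := by
    have hnqa : ¬ le' a q := fun h => hnb a q r h (Ne.symm hq_ne_a) hqr'' hqr' hqra
    rcases Std.Total.total (r := le') q a with h | h
    · exact h
    · exact absurd h hnqa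
  have hlqb : le' q b := by
    have hnqb : ¬ le' b q := fun h => hnb b q r h (Ne.symm hqb) hqr'' hqr' hsub
    rcases Std.Total.total (r := le') q b with h | h
    · exact h
    · exact absurd h hnqb
  -- Step 4: case on whether q is lonely
  by_cases h2q : 2 ≤ S.count q
  · -- q unlonely: derive le' a b then contradiction
    have hs2q_lt : secondIdx S q < S.length := secondIdx_lt h2q
    have hs2q : S[secondIdx S q] = q := getElem_secondIdx h2q hs2q_lt
    have hle2 : secondIdx S a ≤ secondIdx S q := haE q h2q
    have hne2 : secondIdx S a ≠ secondIdx S q := by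
      intro hEq
      apply hq_ne_a
      rw [← hs2q, ← getElem_congr_idx' hEq hs2lt, hs2a]
    have hlt2 : secondIdx S a + 1 ≤ secondIdx S q := by omega
    -- pattern [b, a, q]
    have hb1 : [b] <+ S.take (S.idxOf b + 1) := by
      have := sublist_take_step (List.nil_sublist (S.take (S.idxOf b))) (le_refl _) hiblen
      rw [hSb] at this
      simpa using this
    have hb2 : [b] <+ S.take (secondIdx S a) :=
      hb1.trans (take_sublist_take (by omega))
    have hba : [b, a] <+ S.take (secondIdx S a + 1) := by
      have := sublist_take_step hb2 (le_refl _) hs2lt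
      rw [hs2a] at this
      simpa using this
    have hbaq : [b, a, q] <+ S := by
      have := sublist_take_step hba hlt2 hs2q_lt
      rw [hs2q] at this
      exact (by simpa using this : [b, a, q] <+ S.take (secondIdx S q + 1)).trans
        (List.take_sublist _ _)
    have hnba : ¬ le' b a := fun h => hnb q b a hlqb hqb h (Ne.symm hab) hbaq
    have hlab : le' a b := by
      rcases Std.Total.total (r := le') a b with h | h
      · exact h
      · exact absurd h hnba
    -- pattern [a, b, q]
    have ha1 : [a] <+ S.take (S.idxOf a + 1) := by
      have := sublist_take_step (List.nil_sublist (S.take (S.idxOf a))) (le_refl _) hialen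
      rw [hSa] at this
      simpa using this
    have hab1 : [a, b] <+ S.take (S.idxOf b + 1) := by
      have := sublist_take_step ha1 (le_of_eq hadj.symm) hiblen
      rw [hSb] at this
      simpa using this
    have habq : [a, b, q] <+ S := by
      have h1 : [a, b] <+ S.take (secondIdx S q) :=
        hab1.trans (take_sublist_take (by omega))
      have := sublist_take_step h1 (le_refl _) hs2q_lt
      rw [hs2q] at this
      exact (by simpa using this : [a, b, q] <+ S.take (secondIdx S q + 1)).trans
        (List.take_sublist _ _)
    exact hnb q a b hlqa hq_ne_a hlab hab habq
  · -- q lonely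
    have hcq : S.count q = 1 := by
      have := List.count_pos_iff.2 hq_mem_S
      omega
    by_cases hqmin : ∀ w, le w q → w = q
    · have := hbE q hcq hqmin
      omega
    · push_neg at hqmin
      obtain ⟨x0, hx0, hx0ne⟩ := hqmin
      have hMprop : ∀ u v : Γ, le u v → u ≠ v → u ∈ S.take k := by
        intro u v huv hne
        rcases (hiff v u).1 huv with h | h
        · exact absurd h.symm hne
        · exact h.subset (by simp)
      obtain ⟨x, hxq, hxqne, hxmin⟩ := exists_le_min le hpo (S.take k) hMprop hx0 hx0ne
      have hx_take : x ∈ S.take k := hMprop x q hxq hxqne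
      have hx_idx : S.idxOf x < k := indexOf_lt_of_mem_take hx_take
      have hx_S : x ∈ S := List.take_subset _ _ hx_take
      by_cases h2x : 2 ≤ S.count x
      · have hs2x_lt : secondIdx S x < S.length := secondIdx_lt h2x
        have hs2x : S[secondIdx S x] = x := getElem_secondIdx h2x hs2x_lt
        have hle3 : secondIdx S a ≤ secondIdx S x := haE x h2x
        have hqrx : [q, r, x] <+ S := by
          have h1 : [q, r] <+ S.take (secondIdx S x) :=
            hqr_take.trans (take_sublist_take (by omega))
          have := sublist_take_step h1 (le_refl _) hs2x_lt
          rw [hs2x] at this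
          exact (by simpa using this : [q, r, x] <+ S.take (secondIdx S x + 1)).trans
            (List.take_sublist _ _)
        exact hnb x q r (hext x q hxq) hxqne hqr'' hqr' hqrx
      · have hcx : S.count x = 1 := by
          have := List.count_pos_iff.2 hx_S
          omega
        have := hbE x hcx hxmin
        omega
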